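/- arXiv:2501.01444 — 2 statements merged into one kernel-verified Lean document; each statement's English description precedes it below -/
import Mathlib

section
/- Let η₂ ≠ 0, C > 0, C² > 4β², β ≠ 0, and define on the strip where L(x) = Ce^{2η₂x} - β²e^{4η₂x} - 1 > 0 the functions a(x) = √(L(x)), b(x) = -β e^{2η₂x}, c(x) = a(x) - a'(x)/η₂. Then a, b, c satisfy the Gauss equation a·c - b² = -1. -/
/-! Since `a² = L`, we have `a a' = L'/2`, hence `a c = L - L'/(2η₂) = β² e^{4η₂x} - 1 = b² - 1`. -/

open Real

lemma Real.sqrt_mul_deriv_sqrt {f : ℝ → ℝ} {f' x : ℝ} (hf : HasDerivAt f f' x) (hx : 0 < f x) :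
    √(f x) * deriv (fun y => √(f y)) x = f' / 2 := by
  rw [(hf.sqrt hx.ne').deriv]
  have : √(f x) ≠ 0 := (Real.sqrt_pos.mpr hx).ne'
  field_simp

lemma hasDerivAt_const_mul_exp_sub_const_mul_exp (η C β x : ℝ) :
    HasDerivAt (fun y => C * exp (2 * η * y) - β ^ 2 * exp (4 * η * y) - 1)
      (2 * η * (C * exp (2 * η * x) - 2 * β ^ 2 * exp (4 * η * x))) x := by
  have h2 : HasDerivAt (fun y => exp (2 * η * y)) (exp (2 * η * x) * (2 * η)) x :=
    ((hasDerivAt_id x).const_mul (2 * η)).exp.congr_deriv (by simp)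
  have h4 : HasDerivAt (fun y => exp (4 * η * y)) (exp (4 * η * x) * (4 * η)) x :=
    ((hasDerivAt_id x).const_mul (4 * η)).exp.congr_deriv (by simp)
  exact (((h2.const_mul C).sub (h4.const_mul (β ^ 2))).sub_const 1).congr_deriv (by ring)

theorem universal_gauss_general (η₂ C β : ℝ) (hη : η₂ ≠ 0)
    (L a b c : ℝ → ℝ)
    (hL : ∀ x, L x = C * Real.exp (2 * η₂ * x) - β ^ 2 * Real.exp (4 * η₂ * x) - 1)
    (ha : ∀ x, a x = Real.sqrt (L x))
    (hb : ∀ x, b x = -β * Real.exp (2 * η₂ * x))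
    (hc : ∀ x, c x = a x - deriv a x / η₂)
    (x : ℝ) (hx : L x > 0) :
    a x * c x - (b x) ^ 2 = -1 := by
  have hLd : HasDerivAt L (2 * η₂ * (C * exp (2 * η₂ * x) - 2 * β ^ 2 * exp (4 * η₂ * x))) x := by
    rw [funext hL]
    exact hasDerivAt_const_mul_exp_sub_const_mul_exp η₂ C β x
  have ha_mul_deriv :
      a x * deriv a x = η₂ * (C * exp (2 * η₂ * x) - 2 * β ^ 2 * exp (4 * η₂ * x)) := by
    rw [funext ha, Real.sqrt_mul_deriv_sqrt hLd hx]
    ring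
  have ha_sq : a x ^ 2 = L x := by rw [ha, sq_sqrt hx.le]
  have hexp : exp (4 * η₂ * x) = exp (2 * η₂ * x) ^ 2 := by rw [← exp_nat_mul]; ring_nf
  calc a x * c x - b x ^ 2 = a x ^ 2 - a x * deriv a x / η₂ - b x ^ 2 := by rw [hc]; ring
    _ = -1 := by rw [ha_sq, ha_mul_deriv, hL, hb, hexp]; field_simp; ring

/-- The universal coefficients a = √L, b = -βe^{2η₂x}, c = a - a'/η₂
satisfy the Gauss equation ac - b² = -1 wherever L > 0. -/
theorem universal_gauss (η₂ C β : ℝ) (hη : η₂ ≠ 0) (hC : 0 < C)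
    (hCβ : C ^ 2 > 4 * β ^ 2) (hβ : β ≠ 0)
    (L a b c : ℝ → ℝ)
    (hL : ∀ x, L x = C * Real.exp (2 * η₂ * x) - β ^ 2 * Real.exp (4 * η₂ * x) - 1)
    (ha : ∀ x, a x = Real.sqrt (L x))
    (hb : ∀ x, b x = -β * Real.exp (2 * η₂ * x))
    (hc : ∀ x, c x = a x - deriv a x / η₂)
    (x : ℝ) (hx : L x > 0) :
    a x * c x - (b x) ^ 2 = -1 :=
  universal_gauss_general η₂ C β hη L a b c hL ha hb hc x hx
end

section
/- Let μ₂, η₂, μ₃, η₃, γ, λ be real numbers with η₂ ≠ 0, λ ≠ 0, γ ≠ 0, and suppose the constraint η₂² - η₃² - (μ₂η₃ - μ₃η₂)² = 0 holds. Let a, b, c be real numbers with ac - b² = -1 (so (a-c)² + 4b² ≠ 0). If -4η₃b - 2(μ₃η₂ - μ₂η₃)(a - c) = 0 and 2η₃(a - c) - 4(μ₃η₂ - μ₂η₃)b = 0, then a contradiction follows. -/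
/-! The two linear equations form, in the unknowns `2b` and `a - c`, a system whose determinant is
`-(η₃² + k²)` with `k = μ₃η₂ - μ₂η₃`. The Gauss condition `ac - b² = -1` rules out the trivial solution
`b = 0, a = c`, so `η₃ = k = 0`, and then the constraint forces `η₂² = 0`. -/

theorem eq_zero_and_eq_zero_or_of_mul_add_mul_eq_zero {R : Type*} [CommRing R] [LinearOrder R]
    [IsStrictOrderedRing R] {p q x y : R} (h₁ : p * x + q * y = 0) (h₂ : q * x - p * y = 0) :
    (p = 0 ∧ q = 0) ∨ (x = 0 ∧ y = 0) := by
  have hx : (p * p + q * q) * x = 0 := by linear_combination p * h₁ + q * h₂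
  have hy : (p * p + q * q) * y = 0 := by linear_combination q * h₁ - p * h₂
  rcases eq_or_ne (p * p + q * q) 0 with h | h
  · exact .inl (mul_self_add_mul_self_eq_zero.mp h)
  · exact .inr ⟨(mul_eq_zero.mp hx).resolve_left h, (mul_eq_zero.mp hy).resolve_left h⟩

theorem prop42_contradiction_general (μ₂ η₂ μ₃ η₃ a b c : ℝ)
    (hη₂ : η₂ ≠ 0)
    (hconstraint : η₂ ^ 2 - η₃ ^ 2 - (μ₂ * η₃ - μ₃ * η₂) ^ 2 = 0)
    (hGauss : a * c - b ^ 2 = -1)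
    (h1 : -4 * η₃ * b - 2 * (μ₃ * η₂ - μ₂ * η₃) * (a - c) = 0)
    (h2 : 2 * η₃ * (a - c) - 4 * (μ₃ * η₂ - μ₂ * η₃) * b = 0) : False := by
  rcases eq_zero_and_eq_zero_or_of_mul_add_mul_eq_zero (p := η₃) (q := μ₃ * η₂ - μ₂ * η₃)
      (x := 2 * b) (y := a - c) (by linear_combination -h1 / 2) (by linear_combination -h2 / 2)
    with ⟨hη₃, hk⟩ | ⟨hb, hac⟩
  · have hη₂sq : η₂ ^ 2 = 0 := by
      linear_combination hconstraint + η₃ * hη₃ + (μ₃ * η₂ - μ₂ * η₃) * hk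
    exact hη₂ (pow_eq_zero_iff two_ne_zero |>.mp hη₂sq)
  · have hcc : c * c = -1 := by linear_combination hGauss - c * hac + b / 2 * hb
    linarith [mul_self_nonneg c]

/-- The core contradiction in Proposition 4.2. -/
theorem prop42_contradiction (μ₂ η₂ μ₃ η₃ γ lam a b c : ℝ)
    (hη₂ : η₂ ≠ 0) (hlam : lam ≠ 0) (hγ : γ ≠ 0)
    (hconstraint : η₂ ^ 2 - η₃ ^ 2 - (μ₂ * η₃ - μ₃ * η₂) ^ 2 = 0)
    (hGauss : a * c - b ^ 2 = -1)
    (h1 : -4 * η₃ * b - 2 * (μ₃ * η₂ - μ₂ * η₃) * (a - c) = 0)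
    (h2 : 2 * η₃ * (a - c) - 4 * (μ₃ * η₂ - μ₂ * η₃) * b = 0) : False :=
  prop42_contradiction_general μ₂ η₂ μ₃ η₃ a b c hη₂ hconstraint hGauss h1 h2
end
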